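/- arXiv:2212.10579 — 2 statements merged into one kernel-verified Lean document; each statement's English description precedes it below -/
import Mathlib

section
/- Let y, M_a, M_b be {-1,1}-valued random variables with y² = 1 almost surely, and suppose y·M_a and y·M_b are independent. Then E[y M_a] · E[y M_b] = E[M_a M_b]. -/
open MeasureTheory ProbabilityTheory

theorem stmt_1 {Ω : Type*} [MeasurableSpace Ω] (μ : Measure Ω) [IsProbabilityMeasure μ]
    (y Ma Mb : Ω → ℝ)
    (hy : ∀ᵐ ω ∂μ, y ω = 1 ∨ y ω = -1)
    (hMa : ∀ᵐ ω ∂μ, Ma ω = 1 ∨ Ma ω = -1)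
    (hMb : ∀ᵐ ω ∂μ, Mb ω = 1 ∨ Mb ω = -1)
    (hmy : Measurable y) (hma : Measurable Ma) (hmb : Measurable Mb)
    (hind : IndepFun (fun ω => y ω * Ma ω) (fun ω => y ω * Mb ω) μ) :
    (∫ ω, y ω * Ma ω ∂μ) * (∫ ω, y ω * Mb ω ∂μ) = ∫ ω, Ma ω * Mb ω ∂μ := by
  have hbnd : ∀ (f : Ω → ℝ), Measurable f → (∀ᵐ ω ∂μ, f ω = 1 ∨ f ω = -1) →
      Integrable f μ := by
    intro f hf hae
    refine (integrable_const (1 : ℝ)).mono' hf.aestronglyMeasurable ?_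
    filter_upwards [hae] with ω h
    rcases h with h | h <;> simp [h]
  have h1 : Integrable (fun ω => y ω * Ma ω) μ := by
    refine hbnd _ (hmy.mul hma) ?_
    filter_upwards [hy, hMa] with ω h1 h2
    rcases h1 with h1 | h1 <;> rcases h2 with h2 | h2 <;> simp [h1, h2]
  have h2 : Integrable (fun ω => y ω * Mb ω) μ := by
    refine hbnd _ (hmy.mul hmb) ?_
    filter_upwards [hy, hMb] with ω h1 h2
    rcases h1 with h1 | h1 <;> rcases h2 with h2 | h2 <;> simp [h1, h2]
  rw [← hind.integral_mul_eq_mul_integral h1.aestronglyMeasurable h2.aestronglyMeasurable]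
  refine integral_congr_ae ?_
  filter_upwards [hy] with ω h
  rcases h with h | h <;> simp [h]
end

section
/- Let y, M_a, M_b, M_c be {-1,1}-valued random variables with y² = 1 a.s., such that the three products yM_a, yM_b, yM_c are pairwise independent, E[y M_i] > 0 for each i ∈ {a,b,c}, and E[M_b M_c] ≠ 0. Then E[y M_a] = sqrt( |E[M_a M_b] · E[M_a M_c] / E[M_b M_c]| ). -/
open MeasureTheory ProbabilityTheory

theorem stmt_2 {Ω : Type*} [MeasurableSpace Ω] (μ : Measure Ω) [IsProbabilityMeasure μ]
    (y Ma Mb Mc : Ω → ℝ)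
    (hy : ∀ᵐ ω ∂μ, y ω = 1 ∨ y ω = -1)
    (hMa : ∀ᵐ ω ∂μ, Ma ω = 1 ∨ Ma ω = -1)
    (hMb : ∀ᵐ ω ∂μ, Mb ω = 1 ∨ Mb ω = -1)
    (hMc : ∀ᵐ ω ∂μ, Mc ω = 1 ∨ Mc ω = -1)
    (hmy : Measurable y) (hma : Measurable Ma) (hmb : Measurable Mb) (hmc : Measurable Mc)
    (hab : IndepFun (fun ω => y ω * Ma ω) (fun ω => y ω * Mb ω) μ)
    (hac : IndepFun (fun ω => y ω * Ma ω) (fun ω => y ω * Mc ω) μ)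
    (hbc : IndepFun (fun ω => y ω * Mb ω) (fun ω => y ω * Mc ω) μ)
    (hpa : 0 < ∫ ω, y ω * Ma ω ∂μ)
    (hpb : 0 < ∫ ω, y ω * Mb ω ∂μ)
    (hpc : 0 < ∫ ω, y ω * Mc ω ∂μ)
    (hne : (∫ ω, Mb ω * Mc ω ∂μ) ≠ 0) :
    (∫ ω, y ω * Ma ω ∂μ) =
      Real.sqrt |((∫ ω, Ma ω * Mb ω ∂μ) * (∫ ω, Ma ω * Mc ω ∂μ)) / (∫ ω, Mb ω * Mc ω ∂μ)| := by
  have hint : ∀ (f g : Ω → ℝ), Measurable f → Measurable g →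
      (∀ᵐ ω ∂μ, f ω = 1 ∨ f ω = -1) → (∀ᵐ ω ∂μ, g ω = 1 ∨ g ω = -1) →
      Integrable (fun ω => f ω * g ω) μ := by
    intro f g hf hg haf hag
    refine Integrable.mono' (integrable_const 1) ((hf.mul hg).aestronglyMeasurable) ?_
    filter_upwards [haf, hag] with ω h1 h2
    rcases h1 with h1 | h1 <;> rcases h2 with h2 | h2 <;> simp [h1, h2]
  have key : ∀ (f g : Ω → ℝ), Measurable f → Measurable g →
      (∀ᵐ ω ∂μ, f ω = 1 ∨ f ω = -1) → (∀ᵐ ω ∂μ, g ω = 1 ∨ g ω = -1) →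
      IndepFun (fun ω => y ω * f ω) (fun ω => y ω * g ω) μ →
      (∫ ω, f ω * g ω ∂μ) = (∫ ω, y ω * f ω ∂μ) * (∫ ω, y ω * g ω ∂μ) := by
    intro f g hf hg haf hag hind
    have := hind.integral_mul_eq_mul_integral (hint y f hmy hf hy haf).aestronglyMeasurable (hint y g hmy hg hy hag).aestronglyMeasurable
    rw [← this]
    apply integral_congr_ae
    filter_upwards [hy] with ω h1
    have hy2 : y ω * y ω = 1 := by rcases h1 with h | h <;> simp [h]
    simp only [Pi.mul_apply]
    ring_nf
    rw [sq]
    rw [hy2]; ring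
  have eab := key Ma Mb hma hmb hMa hMb hab
  have eac := key Ma Mc hma hmc hMa hMc hac
  have ebc := key Mb Mc hmb hmc hMb hMc hbc
  set a := ∫ ω, y ω * Ma ω ∂μ
  set b := ∫ ω, y ω * Mb ω ∂μ
  set c := ∫ ω, y ω * Mc ω ∂μ
  rw [eab, eac, ebc]
  have hbc0 : b * c ≠ 0 := by rw [ebc] at hne; exact hne
  have : a * b * (a * c) / (b * c) = a ^ 2 := by field_simp
  rw [this, abs_of_nonneg (sq_nonneg a), Real.sqrt_sq hpa.le]
end
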